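/- arXiv:1410.2190 — 2 statements merged into one kernel-verified Lean document; each statement's English description precedes it below -/
import Mathlib

section
/- Fix an integer k ≥ 3, d > 0 and β ≥ 0, and let m = ⌈dn/k⌉. There exist constants 0 < c < C and n0 such that for all n ≥ n0: c·E[Z_β(H'_k(n,m))] ≤ E[Z_β(H_k(n,m))] ≤ C·E[Z_β(H'_k(n,m))]. -/
noncomputable section

open Finset Filter Real
open scoped Classical BigOperators

/-- The set of all `k`-element subsets of `Fin n` (the potential edges of a
`k`-uniform hypergraph on `[n]`). -/
def kSets (n k : ℕ) : Finset (Finset (Fin n)) :=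
  Finset.univ.filter fun e => e.card = k

/-- An edge is monochromatic under the 2-coloring `σ`. -/
def isMono {n : ℕ} (σ : Fin n → Bool) (e : Finset (Fin n)) : Prop :=
  ∀ v ∈ e, ∀ w ∈ e, σ v = σ w

/-- The number `E_H(σ)` of monochromatic edges of the hypergraph `H` under `σ`. -/
def monoCount {n : ℕ} (H : Finset (Finset (Fin n))) (σ : Fin n → Bool) : ℕ :=
  (H.filter fun e => isMono σ e).card

/-- The partition function `Z_β(H)`. -/
def Zp {n : ℕ} (β : ℝ) (H : Finset (Finset (Fin n))) : ℝ :=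
  ∑ τ : Fin n → Bool, Real.exp (-β * (monoCount H τ : ℝ))

/-- Probability of obtaining the hypergraph `H` in the binomial model `H_k(n,p)`. -/
def probHnp (n k : ℕ) (p : ℝ) (H : Finset (Finset (Fin n))) : ℝ :=
  if H ⊆ kSets n k then p ^ H.card * (1 - p) ^ ((kSets n k).card - H.card) else 0

/-- Expectation of `f` over `H_k(n,p)`. -/
def expHnp (n k : ℕ) (p : ℝ) (f : Finset (Finset (Fin n)) → ℝ) : ℝ :=
  ∑ H : Finset (Finset (Fin n)), probHnp n k p H * f H

/-- Probability of an event under `H_k(n,p)`. -/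
def prHnp (n k : ℕ) (p : ℝ) (A : Finset (Finset (Fin n)) → Prop) : ℝ :=
  expHnp n k p fun H => if A H then 1 else 0

/-- The edge probability `p = d / C(n-1,k-1)`. -/
def pEdge (n k : ℕ) (d : ℝ) : ℝ := d / ((n - 1).choose (k - 1) : ℝ)

/-- The first-moment value `ln 2 + (d/k)·ln(1 − 2^{1−k}(1 − e^{−β}))`. -/
def phiBound (k : ℕ) (d β : ℝ) : ℝ :=
  Real.log 2 + d / k * Real.log (1 - (2:ℝ) ^ ((1:ℤ) - k) * (1 - Real.exp (-β)))

/-- The sequence `n ↦ (1/n)·E[ln Z_β(H_k(n,p))]` with `p = d/C(n-1,k-1)`. -/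
def freeEnergySeq (k : ℕ) (d β : ℝ) (n : ℕ) : ℝ :=
  expHnp n k (pEdge n k d) (fun H => Real.log (Zp β H)) / n

/-- The function `Σ_{k,d}(β)`. -/
def SigmaKD (k : ℕ) (d β : ℝ) : ℝ :=
  (β + 1) * Real.exp (-β + k * Real.log 2) * Real.log 2
    - 2 * (d / k - (2:ℝ) ^ (k - 1) * Real.log 2 + Real.log 2)

/-- `m = ⌈dn/k⌉`. -/
def mOf (d : ℝ) (k n : ℕ) : ℕ := ⌈d * n / (k:ℝ)⌉₊

/-- Number of monochromatic edges, with multiplicity, of a multi-hypergraph given as a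
tuple of `m` edges. -/
def monoCountM {n m : ℕ} (H : Fin m → Finset (Fin n)) (σ : Fin n → Bool) : ℕ :=
  (Finset.univ.filter fun i : Fin m => isMono σ (H i)).card

/-- Partition function of a multi-hypergraph. -/
def ZpM {n m : ℕ} (β : ℝ) (H : Fin m → Finset (Fin n)) : ℝ :=
  ∑ τ : Fin n → Bool, Real.exp (-β * (monoCountM H τ : ℝ))

/-- Expectation over `H'_k(n,m)`: `m` edges chosen uniformly and independently with
replacement from all `k`-subsets of `[n]`. -/
def expHM (n k m : ℕ) (f : (Fin m → Finset (Fin n)) → ℝ) : ℝ :=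
  ∑ H : Fin m → Finset (Fin n),
    (∏ i : Fin m, if H i ∈ kSets n k then ((kSets n k).card : ℝ)⁻¹ else 0) * f H

/-- Probability of `H` under `H_k(n,m)`: `m` distinct edges chosen uniformly without
replacement. -/
def probHnm (n k m : ℕ) (H : Finset (Finset (Fin n))) : ℝ :=
  if H ⊆ kSets n k ∧ H.card = m then ((kSets n k).card.choose m : ℝ)⁻¹ else 0

/-- Expectation of `f` over `H_k(n,m)`. -/
def expHnm (n k m : ℕ) (f : Finset (Finset (Fin n)) → ℝ) : ℝ :=
  ∑ H : Finset (Finset (Fin n)), probHnm n k m H * f H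

/-- Number of vertices with color `true` (i.e. `|σ⁻¹(1)|`). -/
def numPlus {n : ℕ} (σ : Fin n → Bool) : ℕ :=
  (Finset.univ.filter fun v => σ v = true).card

/-- A coloring is balanced if `||σ⁻¹(1)| − n/2| ≤ √n`. -/
def isBalanced {n : ℕ} (σ : Fin n → Bool) : Prop :=
  |(numPlus σ : ℝ) - n / 2| ≤ Real.sqrt n

/-- The overlap `⟨σ,τ⟩ = ∑_v σ(v)τ(v)`. -/
def overlap {n : ℕ} (σ τ : Fin n → Bool) : ℤ :=
  ∑ _v ∈ Finset.univ.filter (fun v : Fin n => σ v = τ v), (1:ℤ) +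
    ∑ _v ∈ Finset.univ.filter (fun v : Fin n => σ v ≠ τ v), (-1:ℤ)

/-- The cluster size `C_β(H,σ)`. -/
def clusterSize {n : ℕ} (β : ℝ) (H : Finset (Finset (Fin n))) (σ : Fin n → Bool) : ℝ :=
  ∑ τ : Fin n → Bool,
    if 2 * (n:ℝ) / 3 ≤ (overlap σ τ : ℝ) then Real.exp (-β * (monoCount H τ : ℝ)) else 0

/-- The entropy function `H(z)`. -/
def entH (z : ℝ) : ℝ := -z * Real.log z - (1 - z) * Real.log (1 - z)

/-- The second-moment exponent `Λ_β(α)`. -/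
def Lam (k : ℕ) (d β α : ℝ) : ℝ :=
  entH ((1 + α) / 2) +
    d / k * Real.log (1 - (2:ℝ) ^ ((1:ℤ) - k) * (1 - Real.exp (-β)) *
      (2 - (1 - Real.exp (-β)) * ((1 + α) ^ k + (1 - α) ^ k) / 2 ^ k))

/-- The pair partition function `Z_β(α)` with `α = 2ν/n − 1`, i.e. overlap `2ν − n`. -/
def Zpair {n m : ℕ} (β : ℝ) (ν : ℕ) (H : Fin m → Finset (Fin n)) : ℝ :=
  ∑ σ : Fin n → Bool, ∑ τ : Fin n → Bool,
    if isBalanced σ ∧ isBalanced τ ∧ overlap σ τ = 2 * (ν:ℤ) - (n:ℤ) then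
      Real.exp (-β * ((monoCountM H σ : ℝ) + (monoCountM H τ : ℝ)))
    else 0

/-- Partition function of a multi-hypergraph restricted to balanced colorings. -/
def ZpMbal {n m : ℕ} (β : ℝ) (H : Fin m → Finset (Fin n)) : ℝ :=
  ∑ τ : Fin n → Bool,
    if isBalanced τ then Real.exp (-β * (monoCountM H τ : ℝ)) else 0

/-- `m₀ = 2^{1−k}·e^{−β}·m/(1 − 2^{1−k}(1 − e^{−β}))`. -/
def m0Of (k : ℕ) (β : ℝ) (m : ℕ) : ℝ :=
  (2:ℝ) ^ ((1:ℤ) - k) * Real.exp (-β) * m / (1 - (2:ℝ) ^ ((1:ℤ) - k) * (1 - Real.exp (-β)))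

/-- The probability `p₁` of a monochromatic edge in the planted model. -/
def p1Planted (n k : ℕ) (d β : ℝ) : ℝ :=
  Real.exp (-β) * d /
    ((1 - (2:ℝ) ^ ((1:ℤ) - k) * (1 - Real.exp (-β))) * ((n - 1).choose (k - 1) : ℝ))

/-- The probability `p₂` of a bichromatic edge in the planted model. -/
def p2Planted (n k : ℕ) (d β : ℝ) : ℝ :=
  d / ((1 - (2:ℝ) ^ ((1:ℤ) - k) * (1 - Real.exp (-β))) * ((n - 1).choose (k - 1) : ℝ))

/-- Conditional probability of the hypergraph `H` in the planted model given the planted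
coloring `σ`: monochromatic edges appear with probability `q1`, bichromatic ones with `q2`. -/
def probPlanted (n k : ℕ) (q1 q2 : ℝ) (σ : Fin n → Bool)
    (H : Finset (Finset (Fin n))) : ℝ :=
  if H ⊆ kSets n k then
    (∏ e ∈ (kSets n k).filter (fun e => isMono σ e), if e ∈ H then q1 else 1 - q1) *
      ∏ e ∈ (kSets n k).filter (fun e => ¬ isMono σ e), if e ∈ H then q2 else 1 - q2
  else 0

/-- Probability of an event in the planted model `(σ̂, G)`. -/
def prPlanted (n k : ℕ) (q1 q2 : ℝ)
    (A : (Fin n → Bool) → Finset (Finset (Fin n)) → Prop) : ℝ :=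
  ∑ σ : Fin n → Bool, ∑ H : Finset (Finset (Fin n)),
    ((2:ℝ)⁻¹) ^ n * probPlanted n k q1 q2 σ H * (if A σ H then 1 else 0)

/-- `β_crit(d,k)`, as an extended real (so `⊤ = ∞` if the set is empty). -/
def betaCrit (k : ℕ) (d : ℝ) : EReal :=
  sInf ((fun β : ℝ => (β : EReal)) ''
    {β : ℝ | 0 < β ∧ limsup (freeEnergySeq k d β) atTop < phiBound k d β})

/-- `v` supports the edge `e`: `v ∈ e` and every other vertex of `e` has color `−σ(v)`. -/
def supportsEdge {n : ℕ} (σ : Fin n → Bool) (v : Fin n) (e : Finset (Fin n)) : Prop :=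
  v ∈ e ∧ ∀ w ∈ e, w ≠ v → σ w = !(σ v)

/-- An edge `e` is `U`-endangered: all vertices of `U ∩ e` have the same color. -/
def endangered {n : ℕ} (σ : Fin n → Bool) (U : Finset (Fin n)) (e : Finset (Fin n)) : Prop :=
  ∀ v ∈ U ∩ e, ∀ w ∈ U ∩ e, σ v = σ w

/-- A set `V'` satisfying the two core conditions CR1 and CR2. -/
def goodSet {n : ℕ} (H : Finset (Finset (Fin n))) (σ : Fin n → Bool)
    (V' : Finset (Fin n)) : Prop :=
  (∀ v ∈ V', 100 ≤ (H.filter fun e => supportsEdge σ v e ∧ e ⊆ V').card) ∧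
    ∀ v ∈ V', (H.filter fun e => v ∈ e ∧ endangered σ V' e).card ≤ 10

/-- The core: the largest set satisfying CR1 and CR2 (the union of all such sets). -/
def coreSet {n : ℕ} (H : Finset (Finset (Fin n))) (σ : Fin n → Bool) : Finset (Fin n) :=
  Finset.univ.filter fun v => ∃ V', goodSet H σ V' ∧ v ∈ V'

/-- The backbone: vertices outside the core supporting an edge into the core and occurring
in no `({v} ∪ core)`-endangered edge. -/
def backboneSet {n : ℕ} (H : Finset (Finset (Fin n))) (σ : Fin n → Bool) : Finset (Fin n) :=
  Finset.univ.filter fun v => v ∉ coreSet H σ ∧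
    (∃ e ∈ H, supportsEdge σ v e ∧ e \ {v} ⊆ coreSet H σ) ∧
    ∀ e ∈ H, v ∈ e → ¬ endangered σ (insert v (coreSet H σ)) e

/-- The remaining vertices. -/
def restSet {n : ℕ} (H : Finset (Finset (Fin n))) (σ : Fin n → Bool) : Finset (Fin n) :=
  Finset.univ \ (coreSet H σ ∪ backboneSet H σ)

/-- The free vertices: vertices of the rest all of whose edges meet the core in a
bichromatic set. -/
def freeSet {n : ℕ} (H : Finset (Finset (Fin n))) (σ : Fin n → Bool) : Finset (Fin n) :=
  (restSet H σ).filter fun v => ∀ e ∈ H, v ∈ e →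
    ∃ w1 ∈ e ∩ coreSet H σ, ∃ w2 ∈ e ∩ coreSet H σ, σ w1 ≠ σ w2


section AuxCombinatorics

variable {α : Type*} [DecidableEq α]

/-- Sum over `m`-subsets of `E` of products of weights. -/
def Ssum (g : α → ℝ) (m : ℕ) (E : Finset α) : ℝ :=
  ∑ H ∈ E.powersetCard m, ∏ e ∈ H, g e

lemma Ssum_nonneg {g : α → ℝ} (hg : ∀ e, 0 ≤ g e) (m : ℕ) (E : Finset α) :
    0 ≤ Ssum g m E :=
  Finset.sum_nonneg fun _ _ => Finset.prod_nonneg fun e _ => hg e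

lemma Ssum_zero (g : α → ℝ) (E : Finset α) : Ssum g 0 E = 1 := by
  simp [Ssum]

lemma Ssum_one (g : α → ℝ) (E : Finset α) : Ssum g 1 E = ∑ e ∈ E, g e := by
  simp [Ssum, Finset.powersetCard_one, Finset.sum_map]

lemma Ssum_rec (g : α → ℝ) (m : ℕ) (E : Finset α) :
    ∑ e ∈ E, g e * Ssum g m (E.erase e) = ((m : ℝ) + 1) * Ssum g (m + 1) E := by
  have h1 : ((m : ℝ) + 1) * Ssum g (m + 1) E
      = ∑ K ∈ E.powersetCard (m + 1), ∑ e ∈ K, (g e * ∏ f ∈ K.erase e, g f) := by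
    rw [Ssum, Finset.mul_sum]
    refine Finset.sum_congr rfl fun K hK => ?_
    obtain ⟨hKE, hKc⟩ := Finset.mem_powersetCard.mp hK
    rw [Finset.sum_congr rfl (fun e he => Finset.mul_prod_erase K g he),
      Finset.sum_const, hKc]
    push_cast
    ring
  rw [h1]
  have h2 : ∀ e ∈ E, g e * Ssum g m (E.erase e)
      = ∑ H ∈ (E.erase e).powersetCard m, g e * ∏ f ∈ H, g f := by
    intro e _; rw [Ssum, Finset.mul_sum]
  rw [Finset.sum_congr rfl h2, Finset.sum_sigma', Finset.sum_sigma']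
  refine Finset.sum_nbij' (fun p => (⟨insert p.1 p.2, p.1⟩ : Σ _ : Finset α, α))
    (fun q => (⟨q.2, q.1.erase q.2⟩ : Σ _ : α, Finset α)) ?_ ?_ ?_ ?_ ?_
  · rintro ⟨e, H⟩ hp
    rw [Finset.mem_sigma] at hp
    obtain ⟨heE, hH⟩ := hp
    obtain ⟨hHsub, hHc⟩ := Finset.mem_powersetCard.mp hH
    have heH : e ∉ H := fun h => Finset.notMem_erase e E (hHsub h)
    rw [Finset.mem_sigma]
    refine ⟨Finset.mem_powersetCard.mpr ⟨?_, ?_⟩, Finset.mem_insert_self e H⟩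
    · exact Finset.insert_subset heE (hHsub.trans (Finset.erase_subset e E))
    · rw [Finset.card_insert_of_notMem heH, hHc]
  · rintro ⟨K, e⟩ hq
    rw [Finset.mem_sigma] at hq
    obtain ⟨hK, heK⟩ := hq
    obtain ⟨hKsub, hKc⟩ := Finset.mem_powersetCard.mp hK
    rw [Finset.mem_sigma]
    refine ⟨hKsub heK, Finset.mem_powersetCard.mpr ⟨Finset.erase_subset_erase e hKsub, ?_⟩⟩
    rw [Finset.card_erase_of_mem heK, hKc]
    omega
  · rintro ⟨e, H⟩ hp
    rw [Finset.mem_sigma] at hp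
    obtain ⟨heE, hH⟩ := hp
    have heH : e ∉ H :=
      fun h => Finset.notMem_erase e E ((Finset.mem_powersetCard.mp hH).1 h)
    simp only [Finset.erase_insert heH]
  · rintro ⟨K, e⟩ hq
    rw [Finset.mem_sigma] at hq
    simp only [Finset.insert_erase hq.2]
  · rintro ⟨e, H⟩ hp
    rw [Finset.mem_sigma] at hp
    obtain ⟨heE, hH⟩ := hp
    have heH : e ∉ H :=
      fun h => Finset.notMem_erase e E ((Finset.mem_powersetCard.mp hH).1 h)
    simp only [Finset.erase_insert heH]

lemma Ssum_erase (g : α → ℝ) (m : ℕ) {E : Finset α} {e : α} (he : e ∈ E) :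
    Ssum g (m + 1) E = Ssum g (m + 1) (E.erase e) + g e * Ssum g m (E.erase e) := by
  have hdisj : Disjoint ((E.erase e).powersetCard (m + 1))
      (((E.erase e).powersetCard m).image (insert e)) := by
    rw [Finset.disjoint_left]
    rintro K hK hK'
    obtain ⟨H, hH, rfl⟩ := Finset.mem_image.mp hK'
    exact Finset.notMem_erase e E
      ((Finset.mem_powersetCard.mp hK).1 (Finset.mem_insert_self e H))
  have hinj : ∀ H₁ ∈ (E.erase e).powersetCard m, ∀ H₂ ∈ (E.erase e).powersetCard m,
      insert e H₁ = insert e H₂ → H₁ = H₂ := by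
    intro H₁ h₁ H₂ h₂ h
    have he₁ : e ∉ H₁ := fun hm => Finset.notMem_erase e E ((Finset.mem_powersetCard.mp h₁).1 hm)
    have he₂ : e ∉ H₂ := fun hm => Finset.notMem_erase e E ((Finset.mem_powersetCard.mp h₂).1 hm)
    rw [← Finset.erase_insert he₁, ← Finset.erase_insert he₂, h]
  conv_lhs => rw [Ssum, ← Finset.insert_erase he,
    Finset.powersetCard_succ_insert (Finset.notMem_erase e E)]
  rw [Finset.sum_union hdisj, Finset.sum_image hinj]
  congr 1
  rw [Ssum, Finset.mul_sum]
  refine Finset.sum_congr rfl fun H hH => ?_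
  have heH : e ∉ H := fun hm => Finset.notMem_erase e E ((Finset.mem_powersetCard.mp hH).1 hm)
  rw [Finset.prod_insert heH]

lemma fact_mul_Ssum_le {g : α → ℝ} (hg0 : ∀ e, 0 ≤ g e) :
    ∀ (m : ℕ) (E : Finset α), (m.factorial : ℝ) * Ssum g m E ≤ (∑ e ∈ E, g e) ^ m := by
  intro m
  induction m with
  | zero => intro E; simp [Ssum_zero]
  | succ m ih =>
    intro E
    have hG0 : ∀ F : Finset α, 0 ≤ ∑ e ∈ F, g e :=
      fun F => Finset.sum_nonneg fun e _ => hg0 e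
    calc ((m + 1).factorial : ℝ) * Ssum g (m + 1) E
        = (m.factorial : ℝ) * (((m : ℝ) + 1) * Ssum g (m + 1) E) := by
          rw [Nat.factorial_succ]; push_cast; ring
      _ = (m.factorial : ℝ) * ∑ e ∈ E, g e * Ssum g m (E.erase e) := by rw [Ssum_rec]
      _ = ∑ e ∈ E, g e * ((m.factorial : ℝ) * Ssum g m (E.erase e)) := by
          rw [Finset.mul_sum]; exact Finset.sum_congr rfl fun e _ => by ring
      _ ≤ ∑ e ∈ E, g e * (∑ f ∈ E.erase e, g f) ^ m :=
          Finset.sum_le_sum fun e _ => mul_le_mul_of_nonneg_left (ih _) (hg0 e)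
      _ ≤ ∑ e ∈ E, g e * (∑ f ∈ E, g f) ^ m := by
          refine Finset.sum_le_sum fun e _ => mul_le_mul_of_nonneg_left
            (pow_le_pow_left₀ (hG0 _) (Finset.sum_le_sum_of_subset_of_nonneg
              (Finset.erase_subset e E) fun f _ _ => hg0 f) m) (hg0 e)
      _ = (∑ e ∈ E, g e) ^ (m + 1) := by rw [← Finset.sum_mul, pow_succ, mul_comm]

lemma pow_le_fact_mul_Ssum_aux {g : α → ℝ} (hg0 : ∀ e, 0 ≤ g e) (hg1 : ∀ e, g e ≤ 1)
    (E : Finset α) :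
    ∀ m : ℕ, (∑ e ∈ E, g e) ^ (m + 1)
      ≤ ((m + 1).factorial : ℝ) * Ssum g (m + 1) E + ((m : ℝ) + 1) ^ 2 * (∑ e ∈ E, g e) ^ m := by
  have hG0 : ∀ F : Finset α, 0 ≤ ∑ e ∈ F, g e :=
    fun F => Finset.sum_nonneg fun e _ => hg0 e
  have hS0 : ∀ (m : ℕ) (F : Finset α), 0 ≤ Ssum g m F := fun m F => Ssum_nonneg hg0 m F
  intro m
  induction m with
  | zero =>
    rw [Ssum_one]
    norm_num
  | succ m ih =>
    have key : (∑ e ∈ E, g e) * Ssum g (m + 1) E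
        ≤ ((m : ℝ) + 2) * Ssum g (m + 2) E + ((m : ℝ) + 1) * Ssum g (m + 1) E := by
      have expand : (∑ e ∈ E, g e) * Ssum g (m + 1) E
          = (((m + 1 : ℕ) : ℝ) + 1) * Ssum g (m + 1 + 1) E
            + ∑ e ∈ E, g e * (g e * Ssum g m (E.erase e)) := by
        rw [Finset.sum_mul, Finset.sum_congr rfl (fun e he =>
          show g e * Ssum g (m + 1) E
              = g e * Ssum g (m + 1) (E.erase e) + g e * (g e * Ssum g m (E.erase e)) by
            rw [Ssum_erase g m he]; ring),
          Finset.sum_add_distrib, Ssum_rec]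
      have bnd : ∑ e ∈ E, g e * (g e * Ssum g m (E.erase e))
          ≤ ((m : ℝ) + 1) * Ssum g (m + 1) E := by
        rw [← Ssum_rec]
        exact Finset.sum_le_sum fun e _ => mul_le_mul_of_nonneg_left
          (mul_le_of_le_one_left (hS0 _ _) (hg1 e)) (hg0 e)
      rw [expand]
      push_cast
      have : Ssum g (m + 1 + 1) E = Ssum g (m + 2) E := rfl
      rw [this]
      linarith
    have hfac : (0 : ℝ) ≤ ((m + 1).factorial : ℝ) := Nat.cast_nonneg _
    have hL1 := fact_mul_Ssum_le hg0 (m + 1) E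
    have hGp : 0 ≤ (∑ e ∈ E, g e) ^ (m + 1) := pow_nonneg (hG0 E) _
    have hm0 : (0 : ℝ) ≤ (m : ℝ) := Nat.cast_nonneg _
    have step1 : (∑ e ∈ E, g e) ^ (m + 2)
        ≤ (∑ e ∈ E, g e) * (((m + 1).factorial : ℝ) * Ssum g (m + 1) E
            + ((m : ℝ) + 1) ^ 2 * (∑ e ∈ E, g e) ^ m) := by
      have : (∑ e ∈ E, g e) ^ (m + 2) = (∑ e ∈ E, g e) * (∑ e ∈ E, g e) ^ (m + 1) := by ring
      rw [this]
      exact mul_le_mul_of_nonneg_left ih (hG0 E)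
    have step2 : (∑ e ∈ E, g e) * (((m + 1).factorial : ℝ) * Ssum g (m + 1) E
            + ((m : ℝ) + 1) ^ 2 * (∑ e ∈ E, g e) ^ m)
        = ((m + 1).factorial : ℝ) * ((∑ e ∈ E, g e) * Ssum g (m + 1) E)
            + ((m : ℝ) + 1) ^ 2 * (∑ e ∈ E, g e) ^ (m + 1) := by
      rw [pow_succ]; ring
    have step3 : ((m + 1).factorial : ℝ) * ((∑ e ∈ E, g e) * Ssum g (m + 1) E)
        ≤ ((m + 1).factorial : ℝ) * (((m : ℝ) + 2) * Ssum g (m + 2) E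
            + ((m : ℝ) + 1) * Ssum g (m + 1) E) :=
      mul_le_mul_of_nonneg_left key hfac
    have hfs : ((m + 2).factorial : ℝ) = ((m : ℝ) + 2) * ((m + 1).factorial : ℝ) := by
      rw [Nat.factorial_succ (m + 1)]; push_cast; ring
    have hfin : ((m : ℝ) + 1) * (((m + 1).factorial : ℝ) * Ssum g (m + 1) E)
        ≤ ((m : ℝ) + 1) * (∑ e ∈ E, g e) ^ (m + 1) := by
      refine mul_le_mul_of_nonneg_left ?_ (by positivity)
      exact_mod_cast hL1
    show (∑ e ∈ E, g e) ^ (m + 2)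
        ≤ ((m + 2).factorial : ℝ) * Ssum g (m + 2) E
          + (((m + 1 : ℕ) : ℝ) + 1) ^ 2 * (∑ e ∈ E, g e) ^ (m + 1)
    push_cast
    calc (∑ e ∈ E, g e) ^ (m + 2)
        ≤ ((m + 1).factorial : ℝ) * ((∑ e ∈ E, g e) * Ssum g (m + 1) E)
            + ((m : ℝ) + 1) ^ 2 * (∑ e ∈ E, g e) ^ (m + 1) := by rw [← step2]; exact step1
      _ ≤ ((m + 1).factorial : ℝ) * (((m : ℝ) + 2) * Ssum g (m + 2) E
            + ((m : ℝ) + 1) * Ssum g (m + 1) E)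
            + ((m : ℝ) + 1) ^ 2 * (∑ e ∈ E, g e) ^ (m + 1) := by linarith [step3]
      _ = ((m + 2).factorial : ℝ) * Ssum g (m + 2) E
            + ((m : ℝ) + 1) * (((m + 1).factorial : ℝ) * Ssum g (m + 1) E)
            + ((m : ℝ) + 1) ^ 2 * (∑ e ∈ E, g e) ^ (m + 1) := by rw [hfs]; ring
      _ ≤ ((m + 2).factorial : ℝ) * Ssum g (m + 2) E
            + ((m : ℝ) + 1) * (∑ e ∈ E, g e) ^ (m + 1)
            + ((m : ℝ) + 1) ^ 2 * (∑ e ∈ E, g e) ^ (m + 1) := by linarith [hfin]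
      _ ≤ ((m + 2).factorial : ℝ) * Ssum g (m + 2) E
            + ((m : ℝ) + 1 + 1) ^ 2 * (∑ e ∈ E, g e) ^ (m + 1) := by
          nlinarith [hGp, hm0, mul_nonneg hm0 hGp]

lemma pow_le_two_fact_mul_Ssum {g : α → ℝ} (hg0 : ∀ e, 0 ≤ g e) (hg1 : ∀ e, g e ≤ 1)
    (E : Finset α) (m : ℕ) (hm : 2 * (m : ℝ) ^ 2 ≤ ∑ e ∈ E, g e) :
    (∑ e ∈ E, g e) ^ m ≤ 2 * (m.factorial : ℝ) * Ssum g m E := by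
  have hG0 : 0 ≤ ∑ e ∈ E, g e := Finset.sum_nonneg fun e _ => hg0 e
  cases m with
  | zero => simp [Ssum_zero]
  | succ m =>
    have h2 := pow_le_fact_mul_Ssum_aux hg0 hg1 E m
    have hGp : 0 ≤ (∑ e ∈ E, g e) ^ m := pow_nonneg hG0 m
    push_cast at hm
    have hc : ((m : ℝ) + 1) ^ 2 ≤ (∑ e ∈ E, g e) / 2 := by linarith
    have h3 : ((m : ℝ) + 1) ^ 2 * (∑ e ∈ E, g e) ^ m ≤ (∑ e ∈ E, g e) ^ (m + 1) / 2 := by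
      calc ((m : ℝ) + 1) ^ 2 * (∑ e ∈ E, g e) ^ m
          ≤ ((∑ e ∈ E, g e) / 2) * (∑ e ∈ E, g e) ^ m := mul_le_mul_of_nonneg_right hc hGp
        _ = (∑ e ∈ E, g e) ^ (m + 1) / 2 := by rw [pow_succ]; ring
    have := h2
    push_cast
    linarith

end AuxCombinatorics

section ModelLemmas

lemma kSets_card (n k : ℕ) : (kSets n k).card = n.choose k := by
  have : kSets n k = Finset.powersetCard k Finset.univ := by
    ext e
    simp [kSets, Finset.mem_powersetCard]
  rw [this, Finset.card_powersetCard, Finset.card_univ, Fintype.card_fin]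

/-- The per-edge weight of an edge under coloring `σ`. -/
def wFun (β : ℝ) {n : ℕ} (σ : Fin n → Bool) (e : Finset (Fin n)) : ℝ :=
  if isMono σ e then Real.exp (-β) else 1

lemma wFun_prod {n : ℕ} (β : ℝ) (σ : Fin n → Bool) (H : Finset (Finset (Fin n))) :
    ∏ e ∈ H, wFun β σ e = Real.exp (-β * (monoCount H σ : ℝ)) := by
  rw [monoCount, mul_comm, Real.exp_nat_mul]
  simp only [wFun]
  rw [Finset.prod_ite, Finset.prod_const, Finset.prod_const, one_pow, mul_one]

lemma wFun_prodM {n m : ℕ} (β : ℝ) (σ : Fin n → Bool) (H : Fin m → Finset (Fin n)) :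
    ∏ i : Fin m, wFun β σ (H i) = Real.exp (-β * (monoCountM H σ : ℝ)) := by
  rw [monoCountM, mul_comm, Real.exp_nat_mul]
  simp only [wFun]
  rw [Finset.prod_ite, Finset.prod_const, Finset.prod_const, one_pow, mul_one]

lemma expHnm_eq (n k m : ℕ) (β : ℝ) :
    expHnm n k m (Zp β) = ∑ σ : Fin n → Bool,
      (((kSets n k).card.choose m : ℝ))⁻¹ * Ssum (wFun β σ) m (kSets n k) := by
  have hset : Finset.univ.filter
      (fun H : Finset (Finset (Fin n)) => H ⊆ kSets n k ∧ H.card = m)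
      = (kSets n k).powersetCard m := by
    ext H
    simp [Finset.mem_powersetCard]
  rw [expHnm]
  calc ∑ H : Finset (Finset (Fin n)), probHnm n k m H * Zp β H
      = ∑ H : Finset (Finset (Fin n)),
          (if H ⊆ kSets n k ∧ H.card = m then
            ((kSets n k).card.choose m : ℝ)⁻¹ * Zp β H else 0) := by
        refine Finset.sum_congr rfl fun H _ => ?_
        rw [probHnm]
        by_cases h : H ⊆ kSets n k ∧ H.card = m <;> simp [h]
    _ = ∑ H ∈ (kSets n k).powersetCard m, ((kSets n k).card.choose m : ℝ)⁻¹ * Zp β H := by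
        rw [← hset, Finset.sum_filter]
    _ = ∑ H ∈ (kSets n k).powersetCard m, ∑ σ : Fin n → Bool,
          ((kSets n k).card.choose m : ℝ)⁻¹ * ∏ e ∈ H, wFun β σ e := by
        refine Finset.sum_congr rfl fun H _ => ?_
        rw [Zp, Finset.mul_sum]
        exact Finset.sum_congr rfl fun σ _ => by rw [wFun_prod]
    _ = _ := by
        rw [Finset.sum_comm]
        refine Finset.sum_congr rfl fun σ _ => ?_
        rw [Ssum, Finset.mul_sum]

lemma expHM_eq (n k m : ℕ) (β : ℝ) :
    expHM n k m (ZpM β) = ∑ σ : Fin n → Bool,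
      (((kSets n k).card : ℝ)⁻¹ * ∑ e ∈ kSets n k, wFun β σ e) ^ m := by
  rw [expHM]
  have step1 : ∀ H : Fin m → Finset (Fin n),
      (∏ i : Fin m, if H i ∈ kSets n k then ((kSets n k).card : ℝ)⁻¹ else 0) * ZpM β H
      = ∑ σ : Fin n → Bool, ∏ i : Fin m,
          ((if H i ∈ kSets n k then ((kSets n k).card : ℝ)⁻¹ else 0) * wFun β σ (H i)) := by
    intro H
    rw [ZpM, Finset.mul_sum]
    refine Finset.sum_congr rfl fun σ _ => ?_
    rw [Finset.prod_mul_distrib, wFun_prodM]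
  rw [Finset.sum_congr rfl fun H _ => step1 H, Finset.sum_comm]
  refine Finset.sum_congr rfl fun σ _ => ?_
  have hpi := Finset.sum_prod_piFinset (Finset.univ : Finset (Finset (Fin n)))
    (fun (_ : Fin m) e => (if e ∈ kSets n k then ((kSets n k).card : ℝ)⁻¹ else 0) * wFun β σ e)
  rw [Fintype.piFinset_univ] at hpi
  rw [hpi, Finset.prod_const, Finset.card_univ, Fintype.card_fin]
  congr 1
  calc ∑ e : Finset (Fin n),
        (if e ∈ kSets n k then ((kSets n k).card : ℝ)⁻¹ else 0) * wFun β σ e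
      = ∑ e : Finset (Fin n),
          (if e ∈ kSets n k then ((kSets n k).card : ℝ)⁻¹ * wFun β σ e else 0) := by
        refine Finset.sum_congr rfl fun e _ => ?_
        by_cases h : e ∈ kSets n k <;> simp [h]
    _ = ∑ e ∈ kSets n k, ((kSets n k).card : ℝ)⁻¹ * wFun β σ e := by
        rw [← Finset.sum_filter, Finset.filter_mem_eq_inter, Finset.univ_inter]
    _ = ((kSets n k).card : ℝ)⁻¹ * ∑ e ∈ kSets n k, wFun β σ e := by
        rw [Finset.mul_sum]

end ModelLemmas

set_option maxHeartbeats 2000000 in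
theorem statement_6 (k : ℕ) (hk : 3 ≤ k) (d β : ℝ) (hd : 0 < d) (hβ : 0 ≤ β) :
    ∃ c C : ℝ, 0 < c ∧ c < C ∧ ∃ n0 : ℕ, ∀ n : ℕ, n0 ≤ n →
      c * expHM n k (mOf d k n) (ZpM β) ≤ expHnm n k (mOf d k n) (Zp β) ∧
        expHnm n k (mOf d k n) (Zp β) ≤ C * expHM n k (mOf d k n) (ZpM β) := by
  refine ⟨1/2, 2, by norm_num, by norm_num, ?_⟩
  have hs0 : (0 : ℝ) < Real.exp (-β) := Real.exp_pos _
  have hs1 : Real.exp (-β) ≤ 1 := Real.exp_le_one_iff.mpr (by linarith)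
  obtain ⟨n1, hn1⟩ := exists_nat_ge (16 * (d + 1) ^ 2 * (k.factorial : ℝ) / Real.exp (-β))
  refine ⟨max (2 * k) (max 1 n1), fun n hn => ?_⟩
  set s : ℝ := Real.exp (-β) with hs
  set m : ℕ := mOf d k n with hmdef
  set E : Finset (Finset (Fin n)) := kSets n k with hE
  set N : ℕ := E.card with hN
  clear_value N E m s
  -- basic bounds on n
  have hn2k : 2 * k ≤ n := le_trans (le_max_left _ _) hn
  have hn1le : 1 ≤ n := le_trans (le_trans (le_max_left _ _) (le_max_right _ _)) hn
  have hnn1 : n1 ≤ n := le_trans (le_trans (le_max_right _ _) (le_max_right _ _)) hn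
  have hnR1 : (1 : ℝ) ≤ (n : ℝ) := by exact_mod_cast hn1le
  have hkn : k ≤ n := by omega
  have hkR : (3 : ℝ) ≤ (k : ℝ) := by exact_mod_cast hk
  have hnbig : 16 * (d + 1) ^ 2 * (k.factorial : ℝ) / s ≤ (n : ℝ) :=
    le_trans hn1 (by exact_mod_cast hnn1)
  -- m ≥ 1
  have hm1 : 1 ≤ m := by
    rw [hmdef, mOf]
    rw [Nat.one_le_iff_ne_zero, ← Nat.pos_iff_ne_zero, Nat.ceil_pos]
    positivity
  have hmR1 : (1 : ℝ) ≤ (m : ℝ) := by exact_mod_cast hm1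
  -- m ≤ (d+1) n
  have hmub : (m : ℝ) ≤ (d + 1) * n := by
    have h1 : (m : ℝ) < d * n / (k : ℝ) + 1 := by
      rw [hmdef, mOf]
      exact Nat.ceil_lt_add_one (by positivity)
    have h2 : d * n / (k : ℝ) ≤ d * n := by
      apply div_le_self (by positivity)
      linarith
    nlinarith
  -- lower bound on N
  have hNlb : (n : ℝ) ^ 3 / (8 * (k.factorial : ℝ)) ≤ (N : ℝ) := by
    have hnat : (n + 1 - k) ^ 3 ≤ k.factorial * n.choose k := by
      calc (n + 1 - k) ^ 3 ≤ (n + 1 - k) ^ k := by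
            apply Nat.pow_le_pow_right
            · omega
            · exact hk
        _ ≤ n.descFactorial k := Nat.pow_sub_le_descFactorial n k
        _ = k.factorial * n.choose k := Nat.descFactorial_eq_factorial_mul_choose n k
    have hcast : ((n + 1 - k : ℕ) : ℝ) = (n : ℝ) + 1 - (k : ℝ) := by
      have : k ≤ n + 1 := by omega
      push_cast [Nat.cast_sub this]
      ring
    have h3 : ((n : ℝ) / 2) ^ 3 ≤ ((n + 1 - k : ℕ) : ℝ) ^ 3 := by
      apply pow_le_pow_left₀ (by positivity)
      rw [hcast]
      have : (k : ℝ) ≤ (n : ℝ) / 2 := by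
        have : (2 * k : ℕ) ≤ (n : ℕ) := hn2k
        have := (Nat.cast_le (α := ℝ)).mpr this
        push_cast at this
        linarith
      linarith
    have h4 : ((n + 1 - k : ℕ) : ℝ) ^ 3 ≤ (k.factorial : ℝ) * (n.choose k : ℝ) := by
      exact_mod_cast (Nat.cast_le (α := ℝ)).mpr hnat
    have h5 : (N : ℝ) = (n.choose k : ℝ) := by
      rw [hN, hE, kSets_card]
    rw [h5, div_le_iff₀ (by positivity)]
    have hfk : (0 : ℝ) < (k.factorial : ℝ) := by exact_mod_cast k.factorial_pos
    nlinarith [h3, h4]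
  -- the key size condition
  have hcond : 2 * (m : ℝ) ^ 2 ≤ s * (N : ℝ) := by
    have hskey : 16 * (d + 1) ^ 2 * (k.factorial : ℝ) ≤ s * n := by
      rw [div_le_iff₀ hs0] at hnbig
      linarith [hnbig]
    have hfk : (0 : ℝ) < (k.factorial : ℝ) := by exact_mod_cast k.factorial_pos
    have hm2 : 2 * (m : ℝ) ^ 2 ≤ 2 * ((d + 1) * n) ^ 2 := by
      have := pow_le_pow_left₀ (by positivity : (0 : ℝ) ≤ (m : ℝ)) hmub 2
      linarith
    have hmid : 2 * ((d + 1) * n) ^ 2 * (8 * (k.factorial : ℝ)) ≤ s * (n : ℝ) ^ 3 := by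
      have h := mul_le_mul_of_nonneg_right hskey (by positivity : (0 : ℝ) ≤ (n : ℝ) ^ 2)
      calc 2 * ((d + 1) * n) ^ 2 * (8 * (k.factorial : ℝ))
          = 16 * (d + 1) ^ 2 * (k.factorial : ℝ) * (n : ℝ) ^ 2 := by ring
        _ ≤ s * (n : ℝ) * (n : ℝ) ^ 2 := h
        _ = s * (n : ℝ) ^ 3 := by ring
    have hdiv : 2 * ((d + 1) * (n : ℝ)) ^ 2 ≤ s * (n : ℝ) ^ 3 / (8 * (k.factorial : ℝ)) := by
      rw [le_div_iff₀ (by positivity)]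
      linarith [hmid]
    have hlast : s * ((n : ℝ) ^ 3 / (8 * (k.factorial : ℝ))) ≤ s * (N : ℝ) :=
      mul_le_mul_of_nonneg_left hNlb hs0.le
    have heq : s * ((n : ℝ) ^ 3 / (8 * (k.factorial : ℝ)))
        = s * (n : ℝ) ^ 3 / (8 * (k.factorial : ℝ)) := by ring
    rw [heq] at hlast
    linarith [hm2, hdiv, hlast]
  have hN0 : (0 : ℝ) ≤ (N : ℝ) := by exact_mod_cast Nat.zero_le N
  have hNR2 : 2 * (m : ℝ) ^ 2 ≤ (N : ℝ) := by
    nlinarith [hcond, hN0, mul_nonneg (sub_nonneg.mpr hs1) hN0]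
  have hNpos : (0 : ℝ) < (N : ℝ) := by nlinarith [hmR1, hNR2]
  have hmN : m ≤ N := by
    have h2m : (1 : ℝ) ≤ 2 * (m : ℝ) := by linarith
    have hmm : (m : ℝ) * 1 ≤ (m : ℝ) * (2 * (m : ℝ)) :=
      mul_le_mul_of_nonneg_left h2m (by positivity)
    have hx : (m : ℝ) ≤ (N : ℝ) := by linarith [hmm, hNR2]
    exact_mod_cast hx
  have hCpos : 0 < N.choose m := Nat.choose_pos hmN
  have hCR : (0 : ℝ) < (N.choose m : ℝ) := by exact_mod_cast hCpos
  have hdesc : ((N.descFactorial m : ℕ) : ℝ) = (m.factorial : ℝ) * (N.choose m : ℝ) := by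
    exact_mod_cast congrArg (Nat.cast (R := ℝ)) (Nat.descFactorial_eq_factorial_mul_choose N m)
  have hdle : ((N.descFactorial m : ℕ) : ℝ) ≤ (N : ℝ) ^ m := by
    exact_mod_cast (Nat.cast_le (α := ℝ)).mpr (Nat.descFactorial_le_pow N m)
  -- N^m ≤ 2 m! C(N,m) via the constant weight 1
  have hNm2 : (N : ℝ) ^ m ≤ 2 * (m.factorial : ℝ) * (N.choose m : ℝ) := by
    have hone : ∑ e ∈ E, (fun _ : Finset (Fin n) => (1 : ℝ)) e = (N : ℝ) := by
      simp [hN]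
    have hSone : Ssum (fun _ : Finset (Fin n) => (1 : ℝ)) m E = (N.choose m : ℝ) := by
      rw [Ssum]
      simp [Finset.card_powersetCard, hN]
    have := pow_le_two_fact_mul_Ssum (g := fun _ : Finset (Fin n) => (1 : ℝ))
      (fun _ => zero_le_one) (fun _ => le_refl 1) E m (by rw [hone]; exact hNR2)
    rw [hone, hSone] at this
    exact this
  -- per-σ facts
  have hw0 : ∀ (σ : Fin n → Bool) (e : Finset (Fin n)), 0 ≤ wFun β σ e := by
    intro σ e; rw [wFun]; split <;> [exact (Real.exp_pos _).le; exact zero_le_one]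
  have hw1 : ∀ (σ : Fin n → Bool) (e : Finset (Fin n)), wFun β σ e ≤ 1 := by
    intro σ e; rw [wFun]; split <;> [exact hs ▸ hs1; exact le_refl 1]
  have hws : ∀ (σ : Fin n → Bool) (e : Finset (Fin n)), s ≤ wFun β σ e := by
    intro σ e; rw [wFun]; split <;> [exact le_of_eq hs; exact hs1]
  have hGs : ∀ σ : Fin n → Bool, s * (N : ℝ) ≤ ∑ e ∈ E, wFun β σ e := by
    intro σ
    calc s * (N : ℝ) = ∑ _e ∈ E, s := by rw [Finset.sum_const, nsmul_eq_mul, hN]; ring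
      _ ≤ ∑ e ∈ E, wFun β σ e := Finset.sum_le_sum fun e _ => hws σ e
  have hGN : ∀ σ : Fin n → Bool, ∑ e ∈ E, wFun β σ e ≤ (N : ℝ) := by
    intro σ
    calc ∑ e ∈ E, wFun β σ e ≤ ∑ _e ∈ E, (1 : ℝ) := Finset.sum_le_sum fun e _ => hw1 σ e
      _ = (N : ℝ) := by rw [Finset.sum_const, nsmul_eq_mul, hN]; ring
  have hG0 : ∀ σ : Fin n → Bool, 0 ≤ ∑ e ∈ E, wFun β σ e :=
    fun σ => Finset.sum_nonneg fun e _ => hw0 σ e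
  have hS0 : ∀ σ : Fin n → Bool, 0 ≤ Ssum (wFun β σ) m E :=
    fun σ => Ssum_nonneg (hw0 σ) m E
  have hup : ∀ σ : Fin n → Bool,
      (m.factorial : ℝ) * Ssum (wFun β σ) m E ≤ (∑ e ∈ E, wFun β σ e) ^ m :=
    fun σ => fact_mul_Ssum_le (hw0 σ) m E
  have hlo : ∀ σ : Fin n → Bool,
      (∑ e ∈ E, wFun β σ e) ^ m ≤ 2 * (m.factorial : ℝ) * Ssum (wFun β σ) m E := by
    intro σ
    exact pow_le_two_fact_mul_Ssum (hw0 σ) (hw1 σ) E m (le_trans hcond (hGs σ))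
  -- rewrite expectations
  rw [expHnm_eq n k m β, expHM_eq n k m β, ← hE, ← hN]
  constructor
  · rw [Finset.mul_sum]
    refine Finset.sum_le_sum fun σ _ => ?_
    have e1 : (1 / 2 : ℝ) * (((N : ℝ))⁻¹ * ∑ e ∈ E, wFun β σ e) ^ m
        = (∑ e ∈ E, wFun β σ e) ^ m / (2 * (N : ℝ) ^ m) := by
      rw [mul_pow, inv_pow]
      field_simp
    have e2 : ((N.choose m : ℝ))⁻¹ * Ssum (wFun β σ) m E
        = Ssum (wFun β σ) m E / (N.choose m : ℝ) := by
      rw [inv_mul_eq_div]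
    rw [e1, e2, div_le_div_iff₀ (by positivity) hCR]
    have key : (N.choose m : ℝ) * (∑ e ∈ E, wFun β σ e) ^ m
        ≤ 2 * (Ssum (wFun β σ) m E * (N : ℝ) ^ m) := by
      calc (N.choose m : ℝ) * (∑ e ∈ E, wFun β σ e) ^ m
          ≤ (N.choose m : ℝ) * (2 * (m.factorial : ℝ) * Ssum (wFun β σ) m E) :=
            mul_le_mul_of_nonneg_left (hlo σ) hCR.le
        _ = 2 * (Ssum (wFun β σ) m E * ((m.factorial : ℝ) * (N.choose m : ℝ))) := by ring
        _ = 2 * (Ssum (wFun β σ) m E * ((N.descFactorial m : ℕ) : ℝ)) := by rw [hdesc]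
        _ ≤ 2 * (Ssum (wFun β σ) m E * (N : ℝ) ^ m) := by
            have := mul_le_mul_of_nonneg_left hdle (hS0 σ)
            linarith
    linarith [key]
  · rw [Finset.mul_sum]
    refine Finset.sum_le_sum fun σ _ => ?_
    have e1 : (2 : ℝ) * (((N : ℝ))⁻¹ * ∑ e ∈ E, wFun β σ e) ^ m
        = 2 * (∑ e ∈ E, wFun β σ e) ^ m / (N : ℝ) ^ m := by
      rw [mul_pow, inv_pow]
      field_simp
    have e2 : ((N.choose m : ℝ))⁻¹ * Ssum (wFun β σ) m E
        = Ssum (wFun β σ) m E / (N.choose m : ℝ) := by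
      rw [inv_mul_eq_div]
    rw [e1, e2, div_le_div_iff₀ hCR (by positivity)]
    have key : Ssum (wFun β σ) m E * (N : ℝ) ^ m
        ≤ 2 * (∑ e ∈ E, wFun β σ e) ^ m * (N.choose m : ℝ) := by
      calc Ssum (wFun β σ) m E * (N : ℝ) ^ m
          ≤ Ssum (wFun β σ) m E * (2 * (m.factorial : ℝ) * (N.choose m : ℝ)) :=
            mul_le_mul_of_nonneg_left hNm2 (hS0 σ)
        _ = 2 * (N.choose m : ℝ) * ((m.factorial : ℝ) * Ssum (wFun β σ) m E) := by ring
        _ ≤ 2 * (N.choose m : ℝ) * (∑ e ∈ E, wFun β σ e) ^ m := by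
            have := mul_le_mul_of_nonneg_left (hup σ) (by positivity : (0:ℝ) ≤ 2 * (N.choose m : ℝ))
            linarith
        _ = 2 * (∑ e ∈ E, wFun β σ e) ^ m * (N.choose m : ℝ) := by ring
    linarith [key]
end
end

section
/- For all integers k ≥ 3, all d > 0 and every α ∈ [−1,1]∖{0}, the function β ∈ [0,∞) ↦ Λ_β(α) − Λ_β(0) is nondecreasing. In particular, if β_0 ≥ 0 is such that Λ_{β_0}(α) < Λ_{β_0}(0) for all α ∈ [−1,1]∖{0}, then Λ_β(α) < Λ_β(0) for all α ∈ [−1,1]∖{0} and all 0 ≤ β ≤ β_0. -/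
/-!
Write `c = 2^{1-k}(1 - e^{-β})` and `A = (1+α)^k + (1-α)^k`. Since `2^{1-k} · 2^k = 2`, the
argument of the logarithm in `Λ_β(α)` is `(1-c)² + c²(A/2 - 1)`, hence
`Λ_β(α) - Λ_β(0) = H((1+α)/2) - H(1/2) + (d/k) ln(1 + (c/(1-c))² (A/2 - 1))`.
By convexity of `x ↦ x^k`, `A ≥ 2`, and `c ∈ [0,1)` increases with `β`, so the difference is
nondecreasing in `β`; the second claim follows at once.
-/

noncomputable section

open Finset Filter Real
open scoped Classical BigOperators

def lamCoeff (k : ℕ) (β : ℝ) : ℝ := (2:ℝ) ^ ((1:ℤ) - k) * (1 - Real.exp (-β))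

lemma two_zpow_one_sub_mul_two_pow (k : ℕ) : (2:ℝ) ^ ((1:ℤ) - k) * 2 ^ k = 2 := by
  rw [← zpow_natCast, ← zpow_add₀ two_ne_zero]
  simp

lemma lamCoeff_nonneg (k : ℕ) {β : ℝ} (hβ : 0 ≤ β) : 0 ≤ lamCoeff k β := by
  unfold lamCoeff
  have : Real.exp (-β) ≤ 1 := Real.exp_le_one_iff.2 (neg_nonpos.2 hβ)
  positivity

lemma lamCoeff_lt_one {k : ℕ} (hk : 1 ≤ k) (β : ℝ) : lamCoeff k β < 1 := by
  have hq : (2:ℝ) ^ ((1:ℤ) - k) ≤ 1 := zpow_le_one_of_nonpos₀ one_le_two (by omega)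
  have hx : 1 - Real.exp (-β) < 1 := sub_lt_self 1 (Real.exp_pos (-β))
  calc lamCoeff k β < (2:ℝ) ^ ((1:ℤ) - k) * 1 := mul_lt_mul_of_pos_left hx (by positivity)
    _ ≤ 1 := by rwa [mul_one]

lemma lamCoeff_monotone (k : ℕ) : Monotone (lamCoeff k) := fun _ _ h => by
  unfold lamCoeff
  gcongr

lemma two_le_one_add_pow_add_one_sub_pow (k : ℕ) {α : ℝ} (hα : α ∈ Set.Icc (-1:ℝ) 1) :
    2 ≤ (1 + α) ^ k + (1 - α) ^ k := by
  have h := (convexOn_pow k).2 (Set.mem_Ici.2 (by linarith [hα.1] : (0:ℝ) ≤ 1 + α))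
    (Set.mem_Ici.2 (by linarith [hα.2] : (0:ℝ) ≤ 1 - α))
    (by norm_num : (0:ℝ) ≤ 1/2) (by norm_num : (0:ℝ) ≤ 1/2) (by norm_num)
  simp only [smul_eq_mul] at h
  have hmid : 1 / 2 * (1 + α) + 1 / 2 * (1 - α) = 1 := by ring
  rw [hmid, one_pow] at h
  linarith

lemma one_sub_mul_two_sub_eq {q x A N : ℝ} (hN : q * N = 2) :
    1 - q * x * (2 - x * A / N) = (1 - q * x) ^ 2 + (q * x) ^ 2 * (A / 2 - 1) := by
  have hq : q ≠ 0 := left_ne_zero_of_mul (hN ▸ two_ne_zero)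
  rw [eq_div_of_mul_eq hq (by rw [mul_comm, hN] : N * q = 2)]
  field_simp
  ring

lemma Lam_eq (k : ℕ) (d β α : ℝ) :
    Lam k d β α = entH ((1 + α) / 2) + d / k * Real.log ((1 - lamCoeff k β) ^ 2 +
      lamCoeff k β ^ 2 * (((1 + α) ^ k + (1 - α) ^ k) / 2 - 1)) := by
  rw [Lam, one_sub_mul_two_sub_eq (two_zpow_one_sub_mul_two_pow k), lamCoeff]

lemma Lam_sub_Lam_zero {k : ℕ} (hk : 1 ≤ k) (d β : ℝ) {α : ℝ} (hα : α ∈ Set.Icc (-1:ℝ) 1) :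
    Lam k d β α - Lam k d β 0 = entH ((1 + α) / 2) - entH (1 / 2) + d / k *
      Real.log (1 + (lamCoeff k β / (1 - lamCoeff k β)) ^ 2 *
        (((1 + α) ^ k + (1 - α) ^ k) / 2 - 1)) := by
  have hc : 0 < 1 - lamCoeff k β := sub_pos.2 (lamCoeff_lt_one hk β)
  have hA := two_le_one_add_pow_add_one_sub_pow k hα
  have hsplit : (1 - lamCoeff k β) ^ 2 + lamCoeff k β ^ 2 * (((1 + α) ^ k + (1 - α) ^ k) / 2 - 1)
      = (1 - lamCoeff k β) ^ 2 * (1 + (lamCoeff k β / (1 - lamCoeff k β)) ^ 2 *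
        (((1 + α) ^ k + (1 - α) ^ k) / 2 - 1)) := by
    field_simp
  have hpos : 0 < 1 + (lamCoeff k β / (1 - lamCoeff k β)) ^ 2 *
      (((1 + α) ^ k + (1 - α) ^ k) / 2 - 1) := by
    have : 0 ≤ ((1 + α) ^ k + (1 - α) ^ k) / 2 - 1 := by linarith
    positivity
  rw [Lam_eq, Lam_eq, hsplit, Real.log_mul (by positivity) hpos.ne']
  norm_num only [add_zero, sub_zero, one_pow, mul_zero]
  ring

lemma Lam_sub_Lam_zero_monotoneOn {k : ℕ} (hk : 1 ≤ k) {d : ℝ} (hd : 0 ≤ d) {α : ℝ}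
    (hα : α ∈ Set.Icc (-1:ℝ) 1) :
    MonotoneOn (fun β => Lam k d β α - Lam k d β 0) (Set.Ici 0) := by
  intro β₁ hβ₁ β₂ _ hβ
  have hc₁ := lamCoeff_nonneg k hβ₁
  have hc₁₂ := lamCoeff_monotone k hβ
  have hc₂ := lamCoeff_lt_one hk β₂
  have hA : 0 ≤ ((1 + α) ^ k + (1 - α) ^ k) / 2 - 1 := by
    linarith [two_le_one_add_pow_add_one_sub_pow k hα]
  simp only [Lam_sub_Lam_zero hk d _ hα]
  have hc₁' : 0 < 1 - lamCoeff k β₁ := by linarith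
  gcongr
  linarith

theorem statement_12 (k : ℕ) (hk : 3 ≤ k) (d : ℝ) (hd : 0 < d) :
    (∀ α ∈ Set.Icc (-1:ℝ) 1, α ≠ 0 →
      ∀ β1 β2 : ℝ, 0 ≤ β1 → β1 ≤ β2 →
        Lam k d β1 α - Lam k d β1 0 ≤ Lam k d β2 α - Lam k d β2 0) ∧
    (∀ β0 : ℝ, 0 ≤ β0 →
      (∀ α ∈ Set.Icc (-1:ℝ) 1, α ≠ 0 → Lam k d β0 α < Lam k d β0 0) →
      ∀ β : ℝ, 0 ≤ β → β ≤ β0 →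
        ∀ α ∈ Set.Icc (-1:ℝ) 1, α ≠ 0 → Lam k d β α < Lam k d β 0) := by
  have hmono := fun α (hα : α ∈ Set.Icc (-1:ℝ) 1) =>
    Lam_sub_Lam_zero_monotoneOn (by omega : 1 ≤ k) hd.le hα
  refine ⟨fun α hα _ β1 β2 h1 h12 => hmono α hα h1 (h1.trans h12) h12, ?_⟩
  intro β0 hβ0 hlt β hβ hββ0 α hα hα0
  have := hmono α hα hβ hβ0 hββ0
  linarith [hlt α hα hα0]
end
end
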